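/- arXiv:2604.20414 — 2 statements merged into one kernel-verified Lean document; each statement's English description precedes it below -/
import Mathlib

section
/- Let h_N denote the fill distance and q_N the separation radius (half the minimal pairwise distance) of a point set X_N in a domain Ω. Fix γ ∈ (0,1). If each new point x_{N+1} is selected subject to the constraint dist(x_{N+1}, X_N) ≥ γ h_N, where h_N is the fill distance of the current design, then for every N ≥ 2 the mesh ratio satisfies h_N / q_N ≤ 2/γ. -/
open Metric Set

/-- Quasi-uniformity under γ-stabilizing sampling: if every point added after the
first satisfies `dist(x_N, X_N) ≥ γ h_N`, then the mesh ratio `h_N / q_N ≤ 2/γ`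
for every `N ≥ 2`. -/
theorem gamma_stabilizing_quasi_uniform {d : ℕ}
    (Ω : Set (EuclideanSpace ℝ (Fin d)))
    (x : ℕ → EuclideanSpace ℝ (Fin d))
    (hxΩ : ∀ n, x n ∈ Ω)
    (hinj : Function.Injective x)
    (γ : ℝ) (hγ : γ ∈ Set.Ioo (0 : ℝ) 1)
    (h q : ℕ → ℝ)
    (hfill : ∀ N : ℕ, h N = ⨆ y : Ω, ⨅ k : Fin N, dist (y : EuclideanSpace ℝ (Fin d)) (x k))
    (hsep : ∀ N : ℕ, q N =
      (1 / 2) * ⨅ p : {p : Fin N × Fin N // p.1 ≠ p.2}, dist (x p.1.1) (x p.1.2))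
    (hselect : ∀ N : ℕ, 1 ≤ N → ∀ k < N, γ * h N ≤ dist (x N) (x k)) :
    ∀ N : ℕ, 2 ≤ N → h N / q N ≤ 2 / γ := by
  intro N hN
  haveI : Nonempty Ω := ⟨⟨x 0, hxΩ 0⟩⟩
  have hγ0 : (0:ℝ) < γ := hγ.1
  set f : ℕ → Ω → ℝ := fun m y => ⨅ k : Fin m, dist (y : EuclideanSpace ℝ (Fin d)) (x k) with hfdef
  have hbb : ∀ (m : ℕ) (y : Ω), BddBelow (Set.range fun k : Fin m => dist (y : EuclideanSpace ℝ (Fin d)) (x k)) := by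
    intro m y
    exact ⟨0, by rintro _ ⟨k, rfl⟩; exact dist_nonneg⟩
  -- positivity of q N
  haveI hpairne : Nonempty {p : Fin N × Fin N // p.1 ≠ p.2} := by
    refine ⟨⟨(⟨0, by omega⟩, ⟨1, by omega⟩), ?_⟩⟩
    simp [Fin.ext_iff]
  set I : ℝ := ⨅ p : {p : Fin N × Fin N // p.1 ≠ p.2}, dist (x p.1.1) (x p.1.2) with hIdef
  have hIpos : 0 < I := by
    obtain ⟨a, ha⟩ := Finite.exists_min
      (fun p : {p : Fin N × Fin N // p.1 ≠ p.2} => dist (x (p.1.1 : ℕ)) (x (p.1.2 : ℕ)))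
    have h1 : dist (x (a.1.1 : ℕ)) (x (a.1.2 : ℕ)) ≤ I := le_ciInf ha
    have h2 : (0:ℝ) < dist (x (a.1.1 : ℕ)) (x (a.1.2 : ℕ)) := by
      rw [dist_pos]
      intro hc
      exact a.2 (Fin.ext (hinj hc))
    linarith
  have hq : q N = (1/2) * I := hsep N
  have hqpos : 0 < q N := by rw [hq]; linarith
  haveI : Nonempty (Fin N) := ⟨⟨0, by omega⟩⟩
  by_cases hB : BddAbove (Set.range fun y : Ω => f N y)
  · -- boundedness for smaller index sets
    obtain ⟨M, hM⟩ := hB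
    have hNe : (Finset.univ : Finset (Fin N)).Nonempty := ⟨⟨0, by omega⟩, Finset.mem_univ _⟩
    set C : ℝ := (Finset.univ : Finset (Fin N)).sup' hNe (fun k => dist (x 0) (x (k : ℕ))) with hCdef
    have hfle : ∀ y : Ω, dist (y : EuclideanSpace ℝ (Fin d)) (x 0) - C ≤ f N y := by
      intro y
      apply le_ciInf
      intro k
      have h1 : dist (y : EuclideanSpace ℝ (Fin d)) (x 0) ≤ dist (y : EuclideanSpace ℝ (Fin d)) (x (k:ℕ)) + dist (x (k:ℕ)) (x 0) := dist_triangle _ _ _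
      have h2 : dist (x (k:ℕ)) (x 0) ≤ C := by
        rw [dist_comm]
        exact Finset.le_sup' (fun k : Fin N => dist (x 0) (x (k:ℕ))) (Finset.mem_univ k)
      linarith
    have hmono : ∀ i : ℕ, 1 ≤ i → i ≤ N → h N ≤ h i := by
      intro i hi1 hiN
      haveI : Nonempty (Fin i) := ⟨⟨0, by omega⟩⟩
      have hBi : BddAbove (Set.range fun y : Ω => f i y) := by
        refine ⟨M + C, ?_⟩
        rintro _ ⟨y, rfl⟩
        have h1 : f i y ≤ dist (y : EuclideanSpace ℝ (Fin d)) (x 0) :=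
          ciInf_le (hbb i y) ⟨0, by omega⟩
        have h2 : f N y ≤ M := hM ⟨y, rfl⟩
        have h3 := hfle y
        simp only
        linarith
      rw [hfill N, hfill i]
      apply ciSup_le
      intro y
      have h1 : f N y ≤ f i y := by
        apply le_ciInf
        intro k
        exact ciInf_le (hbb N y) ⟨(k : ℕ), by omega⟩
      exact le_trans h1 (le_ciSup hBi y)
    -- key: γ * h N ≤ I
    have hkey : γ * h N ≤ I := by
      apply le_ciInf
      rintro ⟨⟨i, j⟩, hne⟩
      simp only at hne ⊢
      have hij : (i : ℕ) ≠ (j : ℕ) := fun hc => hne (Fin.ext hc)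
      rcases lt_or_gt_of_ne hij with hlt | hgt
      · rw [dist_comm]
        have h1 : γ * h (j : ℕ) ≤ dist (x (j:ℕ)) (x (i:ℕ)) :=
          hselect (j : ℕ) (by omega) (i : ℕ) hlt
        have h2 : h N ≤ h (j : ℕ) := hmono _ (by omega) (by omega)
        nlinarith
      · have h1 : γ * h (i : ℕ) ≤ dist (x (i:ℕ)) (x (j:ℕ)) :=
          hselect (i : ℕ) (by omega) (j : ℕ) hgt
        have h2 : h N ≤ h (i : ℕ) := hmono _ (by omega) (by omega)
        nlinarith
    rw [div_le_div_iff₀ hqpos hγ0]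
    rw [hq]
    nlinarith [hkey]
  · have h0 : h N = 0 := by
      rw [hfill N]
      exact Real.iSup_of_not_bddAbove hB
    rw [h0, zero_div]
    positivity
end

section
/- For the Gaussian kernel k(x,t) = σ² exp(−(x−t)²/(2ℓ²)) in one dimension, the infinite HSGP series k̂_∞(x,t) = Σ_{j=1}^∞ S(πj/(2L)) φ_j(x) φ_j(t) with S the Gaussian spectral density and φ_j the Dirichlet sine basis on (−L,L) satisfies the pointwise bound sup_{x,t ∈ (−B,B)} |k̂_∞(x,t) − k(x,t)| ≤ σ² · 5 · (3 + √(2π)ℓ/(4L)) · exp(−2(L−B)²/ℓ²), for any 0 < B < L. -/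
/-!
Multiplying out `sin a * sin b = (cos (a - b) - cos (a + b)) / 2`, the HSGP series becomes a
difference of two cosine series of the spectral density sampled at the frequencies `π j / (2L)`.
By Poisson summation each of them is `Θ`, the Gaussian periodized with period `4L`, so
`k̂_∞(x,t) = σ² (Θ(x - t) - Θ(x + t + 2L))`: the method of images for the Dirichlet problem on
`(-L, L)`. The image `n = 0` of `Θ(x - t)` is `k(x,t)` itself; for `x, t ∈ (-B, B)` every other
image sits at distance at least `2(L - B) + 4L m` from the origin, `m = 0, 1, …`, so what remains
is bounded by `exp (-2(L - B)² / ℓ²)` times a Gaussian sum, which is compared with an integral.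
-/

open Real

noncomputable section

/-- `sqExp ℓ (x - t)` and `sqExpSpectralDensity ℓ ω` are the kernel `k(x,t)` and its spectral
density `S(ω)` for `σ² = 1`. -/
def sqExp (ℓ u : ℝ) : ℝ := exp (-u ^ 2 / (2 * ℓ ^ 2))

def sqExpSpectralDensity (ℓ ω : ℝ) : ℝ := √(2 * π) * ℓ * exp (-(ℓ ^ 2 * ω ^ 2) / 2)

def periodizedSqExp (ℓ P r : ℝ) : ℝ := ∑' n : ℤ, sqExp ℓ (r - P * n)

end

lemma sqExp_pos (ℓ u : ℝ) : 0 < sqExp ℓ u := exp_pos _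

lemma summable_exp_neg_mul_nat_sq {c : ℝ} (hc : 0 < c) :
    Summable fun n : ℕ => exp (-c * (n : ℝ) ^ 2) := by
  refine (summable_geometric_of_lt_one (exp_pos (-c)).le (exp_lt_one_iff.2 (by linarith)))
    |>.of_nonneg_of_le (fun n => (exp_pos _).le) fun n => ?_
  rw [← exp_nat_mul, exp_le_exp]
  have hn : (n : ℝ) ≤ (n : ℝ) ^ 2 := by exact_mod_cast Nat.le_self_pow two_ne_zero n
  nlinarith

lemma tsum_exp_neg_mul_nat_sq_le {c : ℝ} (hc : 0 < c) :
    ∑' n : ℕ, exp (-c * (n : ℝ) ^ 2) ≤ 1 + √(π / c) / 2 := by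
  rw [(summable_exp_neg_mul_nat_sq hc).tsum_eq_zero_add]
  push_cast
  rw [zero_pow two_ne_zero, mul_zero, exp_zero, add_le_add_iff_left]
  refine Real.tsum_le_of_sum_range_le (fun n => (exp_pos _).le) fun N => ?_
  have hanti : AntitoneOn (fun u : ℝ => exp (-c * u ^ 2)) (Set.Icc 0 (0 + N)) :=
    fun u hu v _ huv => exp_le_exp.2 (by nlinarith [mul_le_mul huv huv hu.1 (hu.1.trans huv)])
  calc ∑ n ∈ Finset.range N, exp (-c * ((n : ℝ) + 1) ^ 2)
      ≤ ∫ u in (0 : ℝ)..0 + N, exp (-c * u ^ 2) := by simpa using hanti.sum_le_integral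
    _ ≤ ∫ u in Set.Ioi 0, exp (-c * u ^ 2) := by
      rw [intervalIntegral.integral_of_le (by positivity)]
      exact MeasureTheory.setIntegral_mono_set (integrable_exp_neg_mul_sq hc).integrableOn
        (.of_forall fun u => (exp_pos _).le) Set.Ioc_subset_Ioi_self.eventuallyLE
    _ = √(π / c) / 2 := integral_gaussian_Ioi c

section Tail

variable {ℓ P d : ℝ}

lemma sqExp_le_sqExp {u : ℝ} (h : |d| ≤ |u|) : sqExp ℓ u ≤ sqExp ℓ d := by
  rw [sqExp, sqExp, exp_le_exp, ← sq_abs u, ← sq_abs d]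
  exact div_le_div_of_nonneg_right (neg_le_neg (pow_le_pow_left₀ (abs_nonneg d) h 2))
    (by positivity)

lemma sqExp_le_mul_exp {u : ℝ} {n : ℕ} (hd : 0 ≤ d) (hP : 0 ≤ P) (hu : d + P * n ≤ |u|) :
    sqExp ℓ u ≤ sqExp ℓ d * exp (-(P ^ 2 / (2 * ℓ ^ 2)) * (n : ℝ) ^ 2) := by
  have hsq : d ^ 2 + (P * n) ^ 2 ≤ u ^ 2 := by
    have h := pow_le_pow_left₀ (by positivity) hu 2
    rw [sq_abs] at h
    nlinarith [mul_nonneg (mul_nonneg hd hP) (Nat.cast_nonneg n : (0 : ℝ) ≤ n)]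
  rw [sqExp, sqExp, ← exp_add, exp_le_exp,
    show -d ^ 2 / (2 * ℓ ^ 2) + -(P ^ 2 / (2 * ℓ ^ 2)) * n ^ 2
      = -(d ^ 2 + (P * n) ^ 2) / (2 * ℓ ^ 2) by ring]
  exact div_le_div_of_nonneg_right (by linarith) (by positivity)

lemma summable_sqExp_and_tsum_le (hℓ : 0 < ℓ) (hP : 0 < P) (hd : 0 ≤ d) {u : ℕ → ℝ}
    (hu : ∀ n, d + P * n ≤ |u n|) :
    Summable (fun n => sqExp ℓ (u n)) ∧
      ∑' n, sqExp ℓ (u n) ≤ sqExp ℓ d * (1 + √(2 * π) * ℓ / (2 * P)) := by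
  have hc : 0 < P ^ 2 / (2 * ℓ ^ 2) := by positivity
  have hmaj := (summable_exp_neg_mul_nat_sq hc).mul_left (sqExp ℓ d)
  have hle := fun n => sqExp_le_mul_exp (ℓ := ℓ) hd hP.le (hu n)
  have hsum : Summable (fun n => sqExp ℓ (u n)) :=
    hmaj.of_nonneg_of_le (fun n => (sqExp_pos ℓ _).le) hle
  refine ⟨hsum, (hsum.tsum_le_tsum hle hmaj).trans ?_⟩
  rw [tsum_mul_left]
  refine mul_le_mul_of_nonneg_left ((tsum_exp_neg_mul_nat_sq_le hc).trans_eq ?_)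
    (sqExp_pos ℓ d).le
  rw [show π / (P ^ 2 / (2 * ℓ ^ 2)) = (√(2 * π) * ℓ / P) ^ 2 by
    rw [div_pow, mul_pow, sq_sqrt (by positivity)]; field_simp, sqrt_sq (by positivity)]
  ring

end Tail

section Poisson

variable {ℓ P : ℝ}

/-- Poisson summation formula for the Gaussian. -/
lemma hasSum_sqExpSpectralDensity_mul_cos (hℓ : 0 < ℓ) (hP : 0 < P) (r : ℝ) :
    HasSum (fun n : ℤ => sqExpSpectralDensity ℓ (2 * π * n / P) * cos (2 * π * n * r / P))
      (P * periodizedSqExp ℓ P r) := by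
  set a : ℝ := 2 * π * ℓ ^ 2 / P ^ 2 with ha_def
  have ha : 0 < a := by positivity
  set f : ℤ → ℂ := fun n => Complex.exp (-π * a * n ^ 2 + 2 * π * (Complex.I * (r / P)) * n)
    with hf
  have hsum : Summable f := by
    refine ((summable_jacobiTheta₂_term_iff (r / P) (Complex.I * a)).2 (by simpa using ha)).congr
      fun n => ?_
    rw [jacobiTheta₂_term, hf]
    congr 1
    linear_combination (π * a * n ^ 2 : ℂ) * Complex.I_sq
  have hre : ∀ n : ℤ, (f n).re = exp (-(π * a) * n ^ 2) * cos (2 * π * n * r / P) := fun n => by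
    simp only [hf]
    rw [show -π * a * n ^ 2 + 2 * π * (Complex.I * (r / P)) * n
        = ((-(π * a) * n ^ 2 : ℝ) : ℂ) + ((2 * π * n * r / P : ℝ) : ℂ) * Complex.I by
          push_cast; ring,
      Complex.exp_add, ← Complex.ofReal_exp, Complex.re_ofReal_mul, Complex.exp_ofReal_mul_I_re]
  have hdual : ∀ n : ℤ, Complex.exp (-π / a * (n + Complex.I * (Complex.I * (r / P))) ^ 2)
      = sqExp ℓ (r - P * n) := fun n => by
    have hP' : (P : ℂ) ≠ 0 := by exact_mod_cast hP.ne'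
    have hℓ' : (ℓ : ℂ) ≠ 0 := by exact_mod_cast hℓ.ne'
    rw [sqExp, Complex.ofReal_exp, ← mul_assoc, Complex.I_mul_I, ha_def]
    congr 1
    push_cast
    field_simp
    ring
  have hsqrt : √a = √(2 * π) * ℓ / P := by
    rw [ha_def, sqrt_div' _ (sq_nonneg P), sqrt_mul' _ (sq_nonneg ℓ), sqrt_sq hℓ.le, sqrt_sq hP.le]
  have hpow : (1 : ℂ) / (a : ℂ) ^ (1 / 2 : ℂ) = ((P / (√(2 * π) * ℓ) : ℝ) : ℂ) := by
    rw [show (a : ℂ) ^ (1 / 2 : ℂ) = ((√a : ℝ) : ℂ) by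
      rw [sqrt_eq_rpow, Complex.ofReal_cpow ha.le]; norm_num, hsqrt]
    push_cast
    field_simp
  have key := Complex.tsum_exp_neg_quadratic (a := a) (by simpa using ha) (Complex.I * (r / P))
  simp_rw [hdual, hpow, ← Complex.ofReal_tsum, ← Complex.ofReal_mul] at key
  have h := (Complex.hasSum_re hsum.hasSum).mul_left (√(2 * π) * ℓ)
  rw [key, Complex.ofReal_re] at h
  have hterm : ∀ n : ℤ, sqExpSpectralDensity ℓ (2 * π * n / P) * cos (2 * π * n * r / P)
      = √(2 * π) * ℓ * (f n).re := fun n => by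
    rw [hre, sqExpSpectralDensity, ha_def]
    field_simp
  have hval : P * periodizedSqExp ℓ P r
      = √(2 * π) * ℓ * (P / (√(2 * π) * ℓ) * ∑' n : ℤ, sqExp ℓ (r - P * n)) := by
    rw [periodizedSqExp]
    field_simp
  simpa only [hterm, hval] using h

lemma hasSum_sqExpSpectralDensity_mul_cos_succ (hℓ : 0 < ℓ) (hP : 0 < P) (r : ℝ) :
    HasSum (fun j : ℕ =>
        sqExpSpectralDensity ℓ (2 * π * (j + 1) / P) * cos (2 * π * (j + 1) * r / P))
      ((P * periodizedSqExp ℓ P r - √(2 * π) * ℓ) / 2) := by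
  set g : ℤ → ℝ := fun n => sqExpSpectralDensity ℓ (2 * π * n / P) * cos (2 * π * n * r / P)
    with hg
  have hint := hasSum_sqExpSpectralDensity_mul_cos hℓ hP r
  have heven : g.Even := fun n => by
    simp only [hg, sqExpSpectralDensity, Int.cast_neg, mul_neg, neg_mul, neg_div, neg_sq, cos_neg]
  have hsucc : Summable fun j : ℕ => g (j + 1) :=
    hint.summable.comp_injective fun i j hij => by simpa using hij
  have hsplit := tsum_int_eq_zero_add_two_mul_tsum_pnat heven hint.summable
  rw [hint.tsum_eq, tsum_pnat_eq_tsum_succ (f := fun j : ℕ => g j)] at hsplit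
  push_cast at hsplit
  have hg0 : g 0 = √(2 * π) * ℓ := by simp [hg, sqExpSpectralDensity]
  convert hsucc.hasSum using 1
  · ext j
    simp [hg]
  · rw [hg0, two_nsmul] at hsplit
    linarith

end Poisson

section Periodized

variable {ℓ P d r : ℝ}

lemma periodizedSqExp_sub_sqExp_mem_Icc (hℓ : 0 < ℓ) (hP : 0 < P) (hd : 0 ≤ d)
    (hr : |r| ≤ P - d) :
    periodizedSqExp ℓ P r - sqExp ℓ r ∈ Set.Icc 0 (sqExp ℓ d * (2 + √(2 * π) * ℓ / P)) := by
  have hright := summable_sqExp_and_tsum_le hℓ hP hd (u := fun n : ℕ => r - P * (n + 1))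
    fun n => by
      rw [abs_sub_comm]
      exact le_trans (by nlinarith [le_abs_self r]) (le_abs_self _)
  have hleft := summable_sqExp_and_tsum_le hℓ hP hd (u := fun n : ℕ => r + P * (n + 1))
    fun n => le_trans (by nlinarith [neg_abs_le r]) (le_abs_self _)
  have hsplit : periodizedSqExp ℓ P r - sqExp ℓ r
      = ∑' n : ℕ, sqExp ℓ (r - P * (n + 1)) + ∑' n : ℕ, sqExp ℓ (r + P * (n + 1)) := by
    rw [periodizedSqExp, tsum_of_add_one_of_neg_add_one
      (hright.1.congr fun n => by push_cast; ring_nf)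
      (hleft.1.congr fun n => by push_cast; ring_nf)]
    push_cast
    ring_nf
  rw [hsplit]
  refine ⟨add_nonneg (tsum_nonneg fun n => (sqExp_pos ℓ _).le)
    (tsum_nonneg fun n => (sqExp_pos ℓ _).le), ?_⟩
  calc _ ≤ 2 * (sqExp ℓ d * (1 + √(2 * π) * ℓ / (2 * P))) := by linarith [hright.2, hleft.2]
    _ = sqExp ℓ d * (2 + √(2 * π) * ℓ / P) := by field_simp

lemma periodizedSqExp_mem_Icc (hℓ : 0 < ℓ) (hP : 0 < P) (hd : 0 ≤ d) (hdr : d ≤ r)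
    (hr : |r| ≤ P - d) :
    periodizedSqExp ℓ P r ∈ Set.Icc 0 (sqExp ℓ d * (3 + √(2 * π) * ℓ / P)) := by
  obtain ⟨hlo, hhi⟩ := periodizedSqExp_sub_sqExp_mem_Icc hℓ hP hd hr
  have hpos := sqExp_pos ℓ r
  have hmono : sqExp ℓ r ≤ sqExp ℓ d :=
    sqExp_le_sqExp (by rw [abs_of_nonneg hd]; exact hdr.trans (le_abs_self r))
  constructor <;> nlinarith

end Periodized

section HSGP

variable {ℓ L : ℝ}

lemma hsgp_term_eq (hL : 0 < L) (σ2 m x t : ℝ) :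
    σ2 * √(2 * π) * ℓ * exp (-(ℓ ^ 2 * (π * m / (2 * L)) ^ 2) / 2)
        * ((√L)⁻¹ * sin (π * m * (x + L) / (2 * L))) * ((√L)⁻¹ * sin (π * m * (t + L) / (2 * L)))
      = σ2 / (2 * L) *
          (sqExpSpectralDensity ℓ (2 * π * m / (4 * L)) * cos (2 * π * m * (x - t) / (4 * L))
            - sqExpSpectralDensity ℓ (2 * π * m / (4 * L))
              * cos (2 * π * m * (x + t + 2 * L) / (4 * L))) := by
  have hsqrt : (√L)⁻¹ * (√L)⁻¹ = L⁻¹ := by rw [← mul_inv, mul_self_sqrt hL.le]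
  rw [show 2 * π * m / (4 * L) = π * m / (2 * L) by field_simp; ring,
    show 2 * π * m * (x - t) / (4 * L) = π * m * (x + L) / (2 * L) - π * m * (t + L) / (2 * L) by
      field_simp; ring,
    show 2 * π * m * (x + t + 2 * L) / (4 * L)
      = π * m * (x + L) / (2 * L) + π * m * (t + L) / (2 * L) by field_simp; ring,
    ← mul_sub, ← two_mul_sin_mul_sin, sqExpSpectralDensity]
  calc _ = σ2 * √(2 * π) * ℓ * exp (-(ℓ ^ 2 * (π * m / (2 * L)) ^ 2) / 2) * ((√L)⁻¹ * (√L)⁻¹)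
        * (sin (π * m * (x + L) / (2 * L)) * sin (π * m * (t + L) / (2 * L))) := by ring
    _ = _ := by rw [hsqrt]; field_simp

lemma tsum_hsgp_eq_periodizedSqExp_sub (hℓ : 0 < ℓ) (hL : 0 < L) (σ2 x t : ℝ) :
    ∑' j : ℕ, σ2 * √(2 * π) * ℓ * exp (-(ℓ ^ 2 * (π * (j + 1) / (2 * L)) ^ 2) / 2)
        * ((√L)⁻¹ * sin (π * (j + 1) * (x + L) / (2 * L)))
        * ((√L)⁻¹ * sin (π * (j + 1) * (t + L) / (2 * L)))
      = σ2 * (periodizedSqExp ℓ (4 * L) (x - t) - periodizedSqExp ℓ (4 * L) (x + t + 2 * L)) := by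
  have hP : 0 < 4 * L := by positivity
  have h := ((hasSum_sqExpSpectralDensity_mul_cos_succ hℓ hP (x - t)).sub
    (hasSum_sqExpSpectralDensity_mul_cos_succ hℓ hP (x + t + 2 * L))).mul_left (σ2 / (2 * L))
  simp_rw [hsgp_term_eq hL, h.tsum_eq]
  field_simp
  ring

end HSGP

theorem gaussian_hsgp_aliasing_error_1d_general (σ2 ℓ B L : ℝ)
    (hσ : 0 < σ2) (hℓ : 0 < ℓ) (hBL : B < L)
    (S : ℝ → ℝ)
    (hS : ∀ ω, S ω = σ2 * Real.sqrt (2 * π) * ℓ * Real.exp (-(ℓ ^ 2 * ω ^ 2) / 2))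
    (φ : ℕ → ℝ → ℝ)
    (hφ : ∀ j x, φ j x = (Real.sqrt L)⁻¹ * Real.sin (π * j * (x + L) / (2 * L)))
    (k : ℝ → ℝ → ℝ)
    (hk : ∀ x t, k x t = σ2 * Real.exp (-(x - t) ^ 2 / (2 * ℓ ^ 2)))
    (khat : ℝ → ℝ → ℝ)
    (hkhat : ∀ x t, khat x t = ∑' j : ℕ, S (π * (j + 1) / (2 * L)) * φ (j + 1) x * φ (j + 1) t) :
    ∀ x ∈ Set.Ioo (-B) B, ∀ t ∈ Set.Ioo (-B) B,
      |khat x t - k x t|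
        ≤ σ2 * 5 * (3 + Real.sqrt (2 * π) * ℓ / (4 * L))
            * Real.exp (-2 * (L - B) ^ 2 / ℓ ^ 2) := by
  rintro x ⟨hx₁, hx₂⟩ t ⟨ht₁, ht₂⟩
  have hP : 0 < 4 * L := by linarith
  have hd : 0 ≤ 2 * (L - B) := by linarith
  have hkhat_eq : khat x t
      = σ2 * (periodizedSqExp ℓ (4 * L) (x - t) - periodizedSqExp ℓ (4 * L) (x + t + 2 * L)) := by
    rw [hkhat]
    simp_rw [hS, hφ, Nat.cast_succ]
    exact tsum_hsgp_eq_periodizedSqExp_sub hℓ (by linarith) σ2 x t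
  have hdecay : sqExp ℓ (2 * (L - B)) = exp (-2 * (L - B) ^ 2 / ℓ ^ 2) := by
    rw [sqExp]; congr 1; field_simp
  obtain ⟨hdirect₀, hdirect⟩ := periodizedSqExp_sub_sqExp_mem_Icc hℓ hP hd (r := x - t)
    (abs_le.2 ⟨by linarith, by linarith⟩)
  obtain ⟨hmirror₀, hmirror⟩ := periodizedSqExp_mem_Icc hℓ hP hd (r := x + t + 2 * L)
    (by linarith) (abs_le.2 ⟨by linarith, by linarith⟩)
  have herr := abs_sub_le_of_nonneg_of_le hdirect₀
    (hdirect.trans (by gcongr; exacts [(sqExp_pos ℓ _).le, by norm_num])) hmirror₀ hmirror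
  rw [hkhat_eq, hk, ← sqExp, ← mul_sub, abs_mul, abs_of_pos hσ, sub_right_comm, ← hdecay]
  have hbound : 0 ≤ sqExp ℓ (2 * (L - B)) * (3 + √(2 * π) * ℓ / (4 * L)) :=
    mul_nonneg (sqExp_pos ℓ _).le (by positivity)
  calc _ ≤ σ2 * (sqExp ℓ (2 * (L - B)) * (3 + √(2 * π) * ℓ / (4 * L))) := by gcongr
    _ ≤ _ := by nlinarith

/-- Aliasing error of the infinite HSGP series for the one-dimensional Gaussian
kernel: `sup_{x,t∈(−B,B)} |k̂_∞(x,t) − k(x,t)| ≤ 5σ²(3 + √(2π)ℓ/(4L)) e^{−2(L−B)²/ℓ²}`. -/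
theorem gaussian_hsgp_aliasing_error_1d (σ2 ℓ B L : ℝ)
    (hσ : 0 < σ2) (hℓ : 0 < ℓ) (hB : 0 < B) (hBL : B < L)
    (S : ℝ → ℝ)
    (hS : ∀ ω, S ω = σ2 * Real.sqrt (2 * π) * ℓ * Real.exp (-(ℓ ^ 2 * ω ^ 2) / 2))
    (φ : ℕ → ℝ → ℝ)
    (hφ : ∀ j x, φ j x = (Real.sqrt L)⁻¹ * Real.sin (π * j * (x + L) / (2 * L)))
    (k : ℝ → ℝ → ℝ)
    (hk : ∀ x t, k x t = σ2 * Real.exp (-(x - t) ^ 2 / (2 * ℓ ^ 2)))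
    (khat : ℝ → ℝ → ℝ)
    (hkhat : ∀ x t, khat x t = ∑' j : ℕ, S (π * (j + 1) / (2 * L)) * φ (j + 1) x * φ (j + 1) t) :
    ∀ x ∈ Set.Ioo (-B) B, ∀ t ∈ Set.Ioo (-B) B,
      |khat x t - k x t|
        ≤ σ2 * 5 * (3 + Real.sqrt (2 * π) * ℓ / (4 * L))
            * Real.exp (-2 * (L - B) ^ 2 / ℓ ^ 2) :=
  gaussian_hsgp_aliasing_error_1d_general σ2 ℓ B L hσ hℓ hBL S hS φ hφ k hk khat hkhat
end
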